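/- arXiv:2107.08725 — 7 statements merged into one kernel-verified Lean document; each statement's English description precedes it below -/
import Mathlib

section
/- For integers k ≥ 2, A ≥ 2, and 1 ≤ α ≤ A-1, given a packing into A bins where: the total size S of items in some α+1 designated bins satisfies S > (α+1)/2, these α+1 bins contain at least α items total (at least one each among α of them), and the other A-α-1 bins contain k items each, the total weight under w(x) = (2(k-1)x+2)/(k+1) is at least A. -/
theorem le_weight_of_size_of_card {𝕜 : Type*} [Field 𝕜] [LinearOrder 𝕜] [IsStrictOrderedRing 𝕜]
    {k A α S n : 𝕜} (hk : 1 ≤ k) (hα : α ≤ A - 1) (hS : (α + 1) / 2 ≤ S)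
    (hn : k * A - (k - 1) * (α + 1) ≤ n) :
    A ≤ (2 * (k - 1) * S + 2 * n) / (k + 1) := by
  rw [le_div_iff₀ (by linarith)]
  have hsize : (k - 1) * (α + 1) ≤ 2 * (k - 1) * S := by
    linarith [mul_le_mul_of_nonneg_left hS (sub_nonneg.mpr hk)]
  have hbins : (k - 1) * (α + 1) ≤ (k - 1) * A :=
    mul_le_mul_of_nonneg_left (by linarith) (sub_nonneg.mpr hk)
  calc A * (k + 1) = 2 * (k * A) - (k - 1) * A := by ring
    _ ≤ 2 * (k * A) - (k - 1) * (α + 1) := by linarith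
    _ = (k - 1) * (α + 1) + 2 * (k * A - (k - 1) * (α + 1)) := by ring
    _ ≤ 2 * (k - 1) * S + 2 * n := by linarith

theorem stmt_2_general (k A α : ℤ) (hk : 2 ≤ k) (hα2 : α ≤ A - 1)
    (S : ℝ) (n : ℤ) (hS : ((α : ℝ) + 1) / 2 < S) (hn : k * A - (k - 1) * (α + 1) ≤ n) :
    (A : ℝ) ≤ (2 * ((k : ℝ) - 1) * S + 2 * (n : ℝ)) / ((k : ℝ) + 1) :=
  le_weight_of_size_of_card (by exact_mod_cast (by omega : 1 ≤ k)) (by exact_mod_cast hα2) hS.le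
    (by exact_mod_cast hn)

theorem stmt_2 (k A α : ℤ) (hk : 2 ≤ k) (hA : 2 ≤ A) (hα1 : 1 ≤ α) (hα2 : α ≤ A - 1)
    (S : ℝ) (n : ℤ) (hS : ((α : ℝ) + 1) / 2 < S) (hn : k * A - (k - 1) * (α + 1) ≤ n) :
    (A : ℝ) ≤ (2 * ((k : ℝ) - 1) * S + 2 * (n : ℝ)) / ((k : ℝ) + 1) :=
  stmt_2_general k A α hk hα2 S n hS hn
end

section
/- For integers k ≥ 2, t ≥ 2 with k ≥ t, and integers A ≥ 2, α ≥ 1 with α ≤ A-1: (1/(k+1))·(2(k-t)·((α-1)(1-1/t)+1) + 2(kA - (k-t)α - (k-1))) ≥ A. -/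
/-!
Multiplying out, the weighted total equals `(k + 1) A + (k - 1)(A - 2) - 2(k - t)(α - 1)/t`, so it
suffices that the deficit `2(k - t)(α - 1)/t` is at most `(k - 1)(A - 2)`. Since `α - 1 ≤ A - 2`
this reduces to `2(k - t)/t ≤ k - 1`, i.e. `2k ≤ (k + 1) t`, which holds as `t ≥ 2` and `k ≥ 0`.
-/

theorem weight_total_eq {K : Type*} [Field K] {k t A α : K} (ht : t ≠ 0) :
    2 * (k - t) * ((α - 1) * (1 - 1 / t) + 1) + 2 * (k * A - (k - t) * α - (k - 1))
      = (k + 1) * A + ((k - 1) * (A - 2) - 2 * (k - t) * (α - 1) / t) := by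
  field_simp
  ring

section

variable {K : Type*} [Field K] [LinearOrder K] [IsStrictOrderedRing K]

theorem two_mul_sub_div_le_sub_one {k t : K} (ht : 2 ≤ t) (hkt : t ≤ k) :
    2 * (k - t) / t ≤ k - 1 := by
  rw [div_le_iff₀ (by linarith)]
  nlinarith [mul_nonneg (sub_nonneg.2 ht) (by linarith : (0 : K) ≤ k)]

theorem deficit_le {k t A α : K} (ht : 2 ≤ t) (hkt : t ≤ k) (hA : 2 ≤ A) (hα : α ≤ A - 1) :
    2 * (k - t) * (α - 1) / t ≤ (k - 1) * (A - 2) :=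
  calc 2 * (k - t) * (α - 1) / t = 2 * (k - t) / t * (α - 1) := by ring
    _ ≤ 2 * (k - t) / t * (A - 2) :=
      mul_le_mul_of_nonneg_left (by linarith) (div_nonneg (by linarith) (by linarith))
    _ ≤ (k - 1) * (A - 2) :=
      mul_le_mul_of_nonneg_right (two_mul_sub_div_le_sub_one ht hkt) (by linarith)

end

theorem stmt_5_general (k t A α : ℤ) (ht : 2 ≤ t) (hkt : t ≤ k)
    (hA : 2 ≤ A) (hα2 : α ≤ A - 1) :
    (A : ℝ) ≤ (1 / ((k : ℝ) + 1)) *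
      (2 * ((k : ℝ) - t) * (((α : ℝ) - 1) * (1 - 1 / (t : ℝ)) + 1)
        + 2 * ((k : ℝ) * A - ((k : ℝ) - t) * α - ((k : ℝ) - 1))) := by
  have htR : (2 : ℝ) ≤ t := by exact_mod_cast ht
  have hktR : (t : ℝ) ≤ k := by exact_mod_cast hkt
  have hAR : (2 : ℝ) ≤ A := by exact_mod_cast hA
  have hαR : (α : ℝ) ≤ A - 1 := by exact_mod_cast hα2
  have hdeficit := deficit_le htR hktR hAR hαR
  rw [weight_total_eq (by positivity), one_div, inv_mul_eq_div,
    le_div_iff₀ (by linarith)]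
  linarith

theorem stmt_5 (k t A α : ℤ) (hk : 2 ≤ k) (ht : 2 ≤ t) (hkt : t ≤ k)
    (hA : 2 ≤ A) (hα1 : 1 ≤ α) (hα2 : α ≤ A - 1) :
    (A : ℝ) ≤ (1 / ((k : ℝ) + 1)) *
      (2 * ((k : ℝ) - t) * (((α : ℝ) - 1) * (1 - 1 / (t : ℝ)) + 1)
        + 2 * ((k : ℝ) * A - ((k : ℝ) - t) * α - ((k : ℝ) - 1))) :=
  stmt_5_general k t A α ht hkt hA hα2
end

section
/- For every integer d ≥ 2, any d-dimensional vector packing instance partitioned into clusters, where each cluster's optimal packing (by First Fit) uses at least 2 bins, satisfies: the sum over clusters of optimal bin counts is at most 2d times the global optimal bin count. -/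
/-!
In an optimal packing of a cluster with `OPT ≥ 2` bins, no two bins could be merged, so any two
bins carry coordinate-total more than `1`; pairing each bin with its cyclic successor shows that
the cluster's coordinate-total is at least `OPT / 2`. Summing over the disjoint clusters and
using that one bin holds coordinate-total at most `d` gives the bound.
-/

/-- A finite set `S` of items with `d`-dimensional sizes `v` can be packed into `B` bins,
where each bin's componentwise total is at most `1` in every coordinate. -/
def VPFeasible (d : ℕ) {ι : Type*} [DecidableEq ι] (v : ι → Fin d → ℝ)
    (S : Finset ι) (B : ℕ) : Prop :=
  ∃ f : ι → Fin B, ∀ j : Fin B, ∀ c : Fin d,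
    ∑ i ∈ S.filter (fun i => f i = j), v i c ≤ 1

/-- The optimal number of bins for packing `S`. -/
noncomputable def VPopt (d : ℕ) {ι : Type*} [DecidableEq ι] (v : ι → Fin d → ℝ)
    (S : Finset ι) : ℕ :=
  sInf {B | VPFeasible d v S B}

section VectorPacking

open Finset

variable {ι : Type*} {d : ℕ} {v : ι → Fin d → ℝ} {S : Finset ι} {β : Type*} [DecidableEq β]

def IsVPPacking (v : ι → Fin d → ℝ) (S : Finset ι) (f : ι → β) : Prop :=
  ∀ b c, ∑ i ∈ S with f i = b, v i c ≤ 1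

def vpMass (v : ι → Fin d → ℝ) (S : Finset ι) : ℝ :=
  ∑ i ∈ S, ∑ c, v i c

theorem isVPPacking_of_injOn (hv1 : ∀ i c, v i c ≤ 1) {f : ι → β} (hf : Set.InjOn f S) :
    IsVPPacking v S f := by
  intro b c
  have hcard : #{i ∈ S | f i = b} ≤ 1 := by
    refine card_le_one.2 fun i hi j hj => ?_
    rw [mem_filter] at hi hj
    exact hf hi.1 hj.1 (hi.2.trans hj.2.symm)
  calc ∑ i ∈ S with f i = b, v i c
      ≤ #{i ∈ S | f i = b} • (1 : ℝ) := sum_le_card_nsmul _ _ _ fun i _ => hv1 i c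
    _ ≤ 1 := by rw [nsmul_one]; exact_mod_cast hcard

theorem vpMass_eq_sum_fiberwise [Fintype β] (f : ι → β) :
    vpMass v S = ∑ b, vpMass v {i ∈ S | f i = b} :=
  (sum_fiberwise S f _).symm

theorem sum_le_vpMass (hv0 : ∀ i c, 0 ≤ v i c) (c : Fin d) : ∑ i ∈ S, v i c ≤ vpMass v S := by
  rw [vpMass, sum_comm]
  exact single_le_sum (fun c _ => sum_nonneg fun i _ => hv0 i c) (mem_univ c)

theorem IsVPPacking.vpMass_fiber_le {f : ι → β} (hf : IsVPPacking v S f) (b : β) :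
    vpMass v {i ∈ S | f i = b} ≤ d := by
  rw [vpMass, sum_comm]
  simpa using sum_le_sum fun c (_ : c ∈ univ) => hf b c

/-- Pairing each index with its cyclic successor. -/
theorem card_le_two_mul_sum_of_one_le_add {n : ℕ} (hn : 2 ≤ n) (T : Fin n → ℝ)
    (hT : ∀ j k, j ≠ k → 1 ≤ T j + T k) : (n : ℝ) ≤ 2 * ∑ j, T j := by
  obtain ⟨m, rfl⟩ := Nat.exists_eq_add_of_le' hn
  have hshift : ∑ j, T (j + 1) = ∑ j, T j :=
    Fintype.sum_equiv (Equiv.addRight 1) _ _ fun _ => rfl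
  calc ((m + 2 : ℕ) : ℝ) = ∑ _j : Fin (m + 2), (1 : ℝ) := by simp
    _ ≤ ∑ j, (T j + T (j + 1)) := sum_le_sum fun j _ => hT _ _ (by simp)
    _ = 2 * ∑ j, T j := by rw [sum_add_distrib, hshift, two_mul]

variable [DecidableEq ι]

theorem IsVPPacking.vpFeasible [Fintype β] {f : ι → β} (hf : IsVPPacking v S f) {B : ℕ}
    (hB : Fintype.card β ≤ B) : VPFeasible d v S B := by
  let e : β ↪ Fin B := (Fintype.equivFin β).toEmbedding.trans (Fin.castLEEmb hB)
  refine ⟨e ∘ f, fun j c => ?_⟩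
  by_cases hj : ∃ b, e b = j
  · obtain ⟨b, rfl⟩ := hj
    simpa only [Function.comp_apply, e.injective.eq_iff] using hf b c
  · have hempty : {i ∈ S | (e ∘ f) i = j} = ∅ :=
      filter_false_of_mem fun i _ h => hj ⟨f i, h⟩
    rw [hempty, sum_empty]
    exact zero_le_one

theorem vpFeasible_card_add_one (hv1 : ∀ i c, v i c ≤ 1) (S : Finset ι) :
    VPFeasible d v S (S.card + 1) := by
  let f : ι → Option S := fun i => if h : i ∈ S then some ⟨i, h⟩ else none
  have hf : Set.InjOn f S := fun i hi j hj hij => by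
    simpa [f, mem_coe.1 hi, mem_coe.1 hj] using hij
  exact (isVPPacking_of_injOn hv1 hf).vpFeasible (by simp)

theorem vpFeasible_vpOpt (hv1 : ∀ i c, v i c ≤ 1) (S : Finset ι) :
    VPFeasible d v S (VPopt d v S) :=
  Nat.sInf_mem (s := {B | VPFeasible d v S B}) ⟨_, vpFeasible_card_add_one hv1 S⟩

theorem not_vpFeasible_of_lt_vpOpt {B : ℕ} (hB : B < VPopt d v S) : ¬VPFeasible d v S B :=
  Nat.notMem_of_lt_sInf hB

theorem IsVPPacking.vpFeasible_merge [Fintype β] {f : ι → β} (hf : IsVPPacking v S f)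
    {j₁ j₂ : β} (hne : j₁ ≠ j₂)
    (hfit : ∀ c, ∑ i ∈ S with f i = j₁, v i c + ∑ i ∈ S with f i = j₂, v i c ≤ 1) :
    VPFeasible d v S (Fintype.card β - 1) := by
  let g : ι → {k // k ≠ j₂} := fun i => if h : f i = j₂ then ⟨j₁, hne⟩ else ⟨f i, h⟩
  have hg : ∀ i (k : {k // k ≠ j₂}), g i = k ↔ f i = k ∨ f i = j₂ ∧ (k : β) = j₁ := by
    rintro i ⟨k, hk⟩
    by_cases h : f i = j₂
    · simp [g, h, Subtype.ext_iff, Ne.symm hk, eq_comm]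
    · simp [g, h, Subtype.ext_iff]
  refine IsVPPacking.vpFeasible (f := g) (fun k c => ?_) (by simp)
  by_cases hk : (k : β) = j₁
  · have hfiber : {i ∈ S | g i = k} = {i ∈ S | f i = j₁} ∪ {i ∈ S | f i = j₂} := by
      ext i
      simp only [mem_filter, mem_union, hg, hk]
      tauto
    rw [hfiber, sum_union (disjoint_filter.2 fun i _ h₁ h₂ => hne (h₁.symm.trans h₂))]
    exact hfit c
  · have hfiber : {i ∈ S | g i = k} = {i ∈ S | f i = k} := by
      ext i
      simp only [mem_filter, hg, hk, and_false, or_false]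
    rw [hfiber]
    exact hf k c

theorem IsVPPacking.one_lt_vpMass_add [Fintype β] (hv0 : ∀ i c, 0 ≤ v i c) {f : ι → β}
    (hf : IsVPPacking v S f) (hmin : ¬VPFeasible d v S (Fintype.card β - 1))
    {j₁ j₂ : β} (hne : j₁ ≠ j₂) :
    1 < vpMass v {i ∈ S | f i = j₁} + vpMass v {i ∈ S | f i = j₂} := by
  by_contra! hle
  refine hmin (hf.vpFeasible_merge hne fun c => ?_)
  have h₁ := sum_le_vpMass (S := {i ∈ S | f i = j₁}) hv0 c
  have h₂ := sum_le_vpMass (S := {i ∈ S | f i = j₂}) hv0 c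
  linarith

theorem VPFeasible.vpMass_le {B : ℕ} (h : VPFeasible d v S B) : vpMass v S ≤ d * B := by
  obtain ⟨f, hf⟩ := h
  calc vpMass v S = ∑ j, vpMass v {i ∈ S | f i = j} := vpMass_eq_sum_fiberwise f
    _ ≤ ∑ _j : Fin B, (d : ℝ) := sum_le_sum fun j _ => IsVPPacking.vpMass_fiber_le hf j
    _ = d * B := by simp [mul_comm]

theorem vpMass_le_mul_vpOpt (hv1 : ∀ i c, v i c ≤ 1) (S : Finset ι) :
    vpMass v S ≤ d * VPopt d v S :=
  (vpFeasible_vpOpt hv1 S).vpMass_le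

theorem vpOpt_le_two_mul_vpMass (hv0 : ∀ i c, 0 ≤ v i c) (hv1 : ∀ i c, v i c ≤ 1)
    (h2 : 2 ≤ VPopt d v S) : (VPopt d v S : ℝ) ≤ 2 * vpMass v S := by
  obtain ⟨f, hf⟩ := vpFeasible_vpOpt hv1 S
  have hmin : ¬VPFeasible d v S (Fintype.card (Fin (VPopt d v S)) - 1) := by
    rw [Fintype.card_fin]
    exact not_vpFeasible_of_lt_vpOpt (by omega)
  rw [vpMass_eq_sum_fiberwise f]
  exact card_le_two_mul_sum_of_one_le_add h2 _ fun j k hjk =>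
    (IsVPPacking.one_lt_vpMass_add hv0 hf hmin hjk).le

end VectorPacking

theorem stmt_13_general {ι : Type*} [DecidableEq ι] (d : ℕ)
    (v : ι → Fin d → ℝ) (hv : ∀ i c, 0 ≤ v i c ∧ v i c ≤ 1)
    (ℓ : ℕ) (C : Fin ℓ → Finset ι)
    (hdisj : ∀ j j', j ≠ j' → Disjoint (C j) (C j'))
    (I : Finset ι) (hI : I = Finset.univ.biUnion C)
    (h2 : ∀ j, 2 ≤ VPopt d v (C j)) :
    ∑ j, VPopt d v (C j) ≤ 2 * d * VPopt d v I := by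
  have hv0 : ∀ i c, 0 ≤ v i c := fun i c => (hv i c).1
  have hv1 : ∀ i c, v i c ≤ 1 := fun i c => (hv i c).2
  have hmass : vpMass v I = ∑ j, vpMass v (C j) := by
    rw [hI]
    exact Finset.sum_biUnion fun j _ j' _ h => hdisj j j' h
  have hreal : (∑ j, VPopt d v (C j) : ℝ) ≤ 2 * d * VPopt d v I :=
    calc (∑ j, VPopt d v (C j) : ℝ)
        ≤ ∑ j, 2 * vpMass v (C j) :=
          Finset.sum_le_sum fun j _ => vpOpt_le_two_mul_vpMass hv0 hv1 (h2 j)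
      _ = 2 * vpMass v I := by rw [hmass, Finset.mul_sum]
      _ ≤ 2 * (d * VPopt d v I) := by
          gcongr
          exact vpMass_le_mul_vpOpt hv1 I
      _ = 2 * d * VPopt d v I := by ring
  exact_mod_cast hreal

theorem stmt_13 {ι : Type*} [DecidableEq ι] (d : ℕ) (hd : 2 ≤ d)
    (v : ι → Fin d → ℝ) (hv : ∀ i c, 0 ≤ v i c ∧ v i c ≤ 1)
    (ℓ : ℕ) (C : Fin ℓ → Finset ι)
    (hdisj : ∀ j j', j ≠ j' → Disjoint (C j) (C j'))
    (I : Finset ι) (hI : I = Finset.univ.biUnion C)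
    (h2 : ∀ j, 2 ≤ VPopt d v (C j)) :
    ∑ j, VPopt d v (C j) ≤ 2 * d * VPopt d v I :=
  stmt_13_general d v hv ℓ C hdisj I hI h2
end

section
/- For integers k ≥ 2, under the weight function w(x) = (2(k-1)/k)·x + 1/k, any bin with at most k items of total size at most 1 has total weight at most (3k-2)/k = 3 - 2/k. -/
open Finset

theorem Finset.sum_mul_add_le {ι : Type*} (t : Finset ι) (s : ι → ℝ) {a b S n : ℝ}
    (ha : 0 ≤ a) (hb : 0 ≤ b) (hsum : ∑ i ∈ t, s i ≤ S) (hcard : (#t : ℝ) ≤ n) :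
    ∑ i ∈ t, (a * s i + b) ≤ a * S + n * b := by
  rw [sum_add_distrib, ← mul_sum, sum_const, nsmul_eq_mul]
  gcongr

lemma natCast_sub_one_div_self_nonneg (k : ℕ) : 0 ≤ ((k : ℝ) - 1) / k := by
  rcases k with _ | k
  · simp
  · rw [Nat.cast_succ, add_sub_cancel_right]
    positivity

theorem stmt_15_general (k : ℕ) (m : ℕ) (hm : m ≤ k)
    (s : Fin m → ℝ) (hsum : ∑ i, s i ≤ 1) :
    ∑ i, (2 * ((k : ℝ) - 1) / k * s i + 1 / k) ≤ (3 * (k : ℝ) - 2) / k := by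
  have hslope : 0 ≤ 2 * ((k : ℝ) - 1) / k := by
    rw [mul_div_assoc]
    exact mul_nonneg zero_le_two (natCast_sub_one_div_self_nonneg k)
  have hcard : (#(univ : Finset (Fin m)) : ℝ) ≤ k := by simpa using hm
  calc ∑ i, (2 * ((k : ℝ) - 1) / k * s i + 1 / k)
      ≤ 2 * ((k : ℝ) - 1) / k * 1 + k * (1 / k) :=
        sum_mul_add_le univ s hslope (by positivity) hsum hcard
    -- an identity in `k` and `k⁻¹`, so it needs no `k ≠ 0`
    _ = (3 * (k : ℝ) - 2) / k := by ring

theorem stmt_15 (k : ℕ) (hk : 2 ≤ k) (m : ℕ) (hm : m ≤ k)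
    (s : Fin m → ℝ) (hs : ∀ i, 0 ≤ s i ∧ s i ≤ 1) (hsum : ∑ i, s i ≤ 1) :
    ∑ i, (2 * ((k : ℝ) - 1) / k * s i + 1 / k) ≤ (3 * (k : ℝ) - 2) / k :=
  stmt_15_general k m hm s hsum
end

section
/- For integers k ≥ 2, under the weight function w(x) = (2(k-2)/k)·x + 1/k for x ≤ 1/2 and w(x) = (2(k-2)/k)·x + 2/k for x > 1/2, any bin with at most k items of total size at most 1 has total weight at most (3k-3)/k = 3 - 3/k. -/
/-!
Each item weighs `c · size + 1/k`, plus another `1/k` if it is larger than `1/2`, where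
`c = 2(k-2)/k ≥ 0`. A bin has total size at most `1`, at most `k` items and at most one item
larger than `1/2`, so its weight is at most `c + 1 + 1/k = (3k-3)/k`.
-/

open Finset

lemma card_filter_half_lt_le_one {ι : Type*} [Fintype ι] (s : ι → ℝ) (hs : ∀ i, 0 ≤ s i)
    (hsum : ∑ i, s i ≤ 1) : #{i | 1 / 2 < s i} ≤ 1 := by
  classical
  refine card_le_one.mpr fun i hi j hj => by_contra fun hij => ?_
  rw [mem_filter] at hi hj
  have hpair : s i + s j ≤ ∑ t, s t := by
    rw [← sum_pair hij]
    exact sum_le_sum_of_subset_of_nonneg (subset_univ _) fun t _ _ => hs t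
  linarith [hi.2, hj.2]

lemma ite_half_weight_eq (c a x : ℝ) :
    (if x ≤ 1 / 2 then c * x + a else c * x + 2 * a) = c * x + a + (if 1 / 2 < x then a else 0) := by
  by_cases h : x ≤ 1 / 2
  · rw [if_pos h, if_neg (not_lt.mpr h)]; ring
  · rw [if_neg h, if_pos (not_le.mp h)]; ring

theorem sum_ite_half_weight_eq {ι : Type*} [Fintype ι] (c a : ℝ) (s : ι → ℝ) :
    ∑ i, (if s i ≤ 1 / 2 then c * s i + a else c * s i + 2 * a)
      = c * ∑ i, s i + Fintype.card ι * a + #{i | 1 / 2 < s i} * a := by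
  classical
  simp only [ite_half_weight_eq, sum_add_distrib, sum_const, card_univ, nsmul_eq_mul, sum_ite,
    mul_zero, add_zero, mul_sum]

theorem stmt_17 (k : ℕ) (hk : 2 ≤ k) (m : ℕ) (hm : m ≤ k)
    (s : Fin m → ℝ) (hs : ∀ i, 0 ≤ s i ∧ s i ≤ 1) (hsum : ∑ i, s i ≤ 1) :
    ∑ i, (if s i ≤ 1 / 2 then 2 * ((k : ℝ) - 2) / k * s i + 1 / k
          else 2 * ((k : ℝ) - 2) / k * s i + 2 / k)
      ≤ (3 * (k : ℝ) - 3) / k := by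
  have hk' : (2 : ℝ) ≤ k := by exact_mod_cast hk
  have hm' : (m : ℝ) ≤ k := by exact_mod_cast hm
  set c : ℝ := 2 * ((k : ℝ) - 2) / k
  have hc : 0 ≤ c := by positivity
  have hbig : (#{i | 1 / 2 < s i} : ℝ) ≤ 1 := by
    exact_mod_cast card_filter_half_lt_le_one s (fun i => (hs i).1) hsum
  have htwo : (2 : ℝ) / k = 2 * (1 / k) := by ring
  rw [htwo, sum_ite_half_weight_eq, Fintype.card_fin]
  calc c * ∑ i, s i + m * (1 / k) + #{i | 1 / 2 < s i} * (1 / k)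
      ≤ c * 1 + k * (1 / k) + 1 * (1 / k) := by gcongr
    _ = (3 * (k : ℝ) - 3) / k := by simp only [c]; field_simp; ring
end

section
/- For integers k ≥ 4, under the weight function w(x) = 1/k + (5(k-2)/(3k))·x, any bin with at most k items of total size at most 1 has total weight at most 8/3 - 10/(3k); and any bin with at least two items and total size greater than 3/5 has weight at least 1, while any bin with k items has weight at least 1. -/
/-!
A bin with `m` items has weight `m / k + c · (total size)` with slope `c = 5(k - 2)/(3k) ≥ 0`,
so each bound follows by monotonicity from an identity in `k` at the extreme bin.
-/

theorem Finset.sum_const_add_mul {ι R : Type*} [Semiring R] (t : Finset ι) (a c : R)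
    (f : ι → R) : ∑ i ∈ t, (a + c * f i) = t.card * a + c * ∑ i ∈ t, f i := by
  rw [Finset.sum_add_distrib, Finset.sum_const, nsmul_eq_mul, Finset.mul_sum]

section WeightFunction

variable {k : ℕ}

lemma weight_slope_nonneg (hk : 2 ≤ k) : 0 ≤ 5 * ((k : ℝ) - 2) / (3 * k) := by
  have : (2 : ℝ) ≤ k := by exact_mod_cast hk
  apply div_nonneg <;> linarith

lemma weight_full_bin (hk : k ≠ 0) :
    (k : ℝ) * (1 / k) + 5 * ((k : ℝ) - 2) / (3 * k) = 8 / 3 - 10 / (3 * k) := by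
  field_simp
  ring

lemma weight_two_items_three_fifths (hk : k ≠ 0) :
    2 * (1 / (k : ℝ)) + 5 * ((k : ℝ) - 2) / (3 * k) * (3 / 5) = 1 := by
  field_simp
  ring

end WeightFunction

theorem stmt_18 (k : ℕ) (hk : 4 ≤ k) :
    (∀ (m : ℕ), m ≤ k → ∀ s : Fin m → ℝ, (∀ i, 0 ≤ s i ∧ s i ≤ 2 / 5) →
      (∑ i, s i ≤ 1) →
      ∑ i, (1 / (k : ℝ) + 5 * ((k : ℝ) - 2) / (3 * k) * s i) ≤ 8 / 3 - 10 / (3 * k)) ∧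
    (∀ (m : ℕ), 2 ≤ m → ∀ s : Fin m → ℝ, (∀ i, 0 ≤ s i ∧ s i ≤ 2 / 5) →
      (3 / 5 : ℝ) < ∑ i, s i →
      1 ≤ ∑ i, (1 / (k : ℝ) + 5 * ((k : ℝ) - 2) / (3 * k) * s i)) ∧
    (∀ s : Fin k → ℝ, (∀ i, 0 ≤ s i) →
      1 ≤ ∑ i, (1 / (k : ℝ) + 5 * ((k : ℝ) - 2) / (3 * k) * s i)) := by
  have hk0 : k ≠ 0 := by omega
  have hslope := weight_slope_nonneg (k := k) (by omega)
  simp only [Finset.sum_const_add_mul, Finset.card_univ, Fintype.card_fin]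
  refine ⟨fun m hm s _ hsum => ?_, fun m hm s _ hsum => ?_, fun s hs => ?_⟩
  · calc (m : ℝ) * (1 / k) + 5 * ((k : ℝ) - 2) / (3 * k) * ∑ i, s i
        ≤ k * (1 / k) + 5 * ((k : ℝ) - 2) / (3 * k) * 1 := by gcongr
      _ = 8 / 3 - 10 / (3 * k) := by rw [mul_one, weight_full_bin hk0]
  · calc (1 : ℝ) = 2 * (1 / k) + 5 * ((k : ℝ) - 2) / (3 * k) * (3 / 5) :=
          (weight_two_items_three_fifths hk0).symm
      _ ≤ m * (1 / k) + 5 * ((k : ℝ) - 2) / (3 * k) * ∑ i, s i := by gcongr; exact_mod_cast hm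
  · have hsum : 0 ≤ ∑ i, s i := Finset.sum_nonneg fun i _ => hs i
    calc (1 : ℝ) = k * (1 / k) := by field_simp
      _ ≤ k * (1 / k) + 5 * ((k : ℝ) - 2) / (3 * k) * ∑ i, s i :=
          le_add_of_nonneg_right (mul_nonneg hslope hsum)
end

section
/- For integers t ≥ 2 and k > t, under the weight function w(x) = ((k-t)/k)·((t+1)/t)·x + 1/k: (a) any bin with at most k items of total size at most 1 has total weight at most 1 + (k-t)(t+1)/(kt); (b) any bin with at least t items and total size at least t/(t+1) has total weight at least 1; (c) any bin with k items has total weight at least 1. -/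
/-!
A bin with `n` items of total size `S` has weight `c * S + n / k`, where
`c = (k - t)(t + 1) / (k t) ≥ 0`. Each bound is then linear in `S` and `n`: `S ≤ 1` and `n ≤ k`
give (a); the constant `c` is chosen so that `c * t / (t + 1) = (k - t) / k`, which together with
`n ≥ t` gives (b); and `n = k` alone already contributes weight `1`, giving (c).
-/

open Finset

section BinWeight

variable {ι : Type*} [Fintype ι]

noncomputable def binWeight (k t : ℝ) (s : ι → ℝ) : ℝ :=
  ∑ i, ((k - t) / k * ((t + 1) / t) * s i + 1 / k)

theorem binWeight_eq (k t : ℝ) (s : ι → ℝ) :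
    binWeight k t s = (k - t) / k * ((t + 1) / t) * ∑ i, s i + Fintype.card ι / k := by
  rw [binWeight, sum_add_distrib, ← mul_sum, sum_const, card_univ, nsmul_eq_mul, mul_one_div]

variable {k t : ℝ} (ht : 0 < t) (htk : t ≤ k)
include ht htk

theorem sizeCoeff_nonneg : 0 ≤ (k - t) / k * ((t + 1) / t) :=
  mul_nonneg (div_nonneg (sub_nonneg.2 htk) (ht.trans_le htk).le) (div_nonneg (by linarith) ht.le)

theorem binWeight_le_of_sum_le_one (s : ι → ℝ) (hcard : (Fintype.card ι : ℝ) ≤ k)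
    (hs : ∑ i, s i ≤ 1) : binWeight k t s ≤ 1 + (k - t) * (t + 1) / (k * t) := by
  have hk : 0 < k := ht.trans_le htk
  have hsize : (k - t) / k * ((t + 1) / t) * ∑ i, s i ≤ (k - t) * (t + 1) / (k * t) := by
    calc (k - t) / k * ((t + 1) / t) * ∑ i, s i ≤ (k - t) / k * ((t + 1) / t) * 1 :=
          mul_le_mul_of_nonneg_left hs (sizeCoeff_nonneg ht htk)
      _ = (k - t) * (t + 1) / (k * t) := by field_simp
  have hcount : (Fintype.card ι : ℝ) / k ≤ 1 := (div_le_one hk).2 hcard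
  rw [binWeight_eq]
  linarith

theorem one_le_binWeight_of_threshold_le_sum (s : ι → ℝ) (hcard : t ≤ Fintype.card ι)
    (hs : t / (t + 1) ≤ ∑ i, s i) : 1 ≤ binWeight k t s := by
  have hk : 0 < k := ht.trans_le htk
  have hsize : (k - t) / k ≤ (k - t) / k * ((t + 1) / t) * ∑ i, s i := by
    calc (k - t) / k = (k - t) / k * ((t + 1) / t) * (t / (t + 1)) := by
          field_simp
      _ ≤ (k - t) / k * ((t + 1) / t) * ∑ i, s i :=
          mul_le_mul_of_nonneg_left hs (sizeCoeff_nonneg ht htk)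
  have hcount : t / k ≤ Fintype.card ι / k := div_le_div_of_nonneg_right hcard hk.le
  have hsplit : (k - t) / k + t / k = 1 := by field_simp; ring
  rw [binWeight_eq]
  linarith

theorem one_le_binWeight_of_card_eq (s : ι → ℝ) (hcard : (Fintype.card ι : ℝ) = k)
    (hs : ∀ i, 0 ≤ s i) : 1 ≤ binWeight k t s := by
  have hsize : 0 ≤ (k - t) / k * ((t + 1) / t) * ∑ i, s i :=
    mul_nonneg (sizeCoeff_nonneg ht htk) (sum_nonneg fun i _ => hs i)
  have hcount : (Fintype.card ι : ℝ) / k = 1 := by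
    rw [hcard]; exact div_self (ht.trans_le htk).ne'
  rw [binWeight_eq]
  linarith

end BinWeight

theorem stmt_19 (k t : ℕ) (ht : 2 ≤ t) (hkt : t < k) :
    (∀ (m : ℕ), m ≤ k → ∀ s : Fin m → ℝ, (∀ i, 0 ≤ s i ∧ s i ≤ 1) →
      (∑ i, s i ≤ 1) →
      ∑ i, (((k : ℝ) - t) / k * (((t : ℝ) + 1) / t) * s i + 1 / k)
        ≤ 1 + ((k : ℝ) - t) * ((t : ℝ) + 1) / ((k : ℝ) * t)) ∧
    (∀ (m : ℕ), t ≤ m → ∀ s : Fin m → ℝ, (∀ i, 0 ≤ s i) →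
      ((t : ℝ) / ((t : ℝ) + 1) ≤ ∑ i, s i) →
      1 ≤ ∑ i, (((k : ℝ) - t) / k * (((t : ℝ) + 1) / t) * s i + 1 / k)) ∧
    (∀ s : Fin k → ℝ, (∀ i, 0 ≤ s i) →
      1 ≤ ∑ i, (((k : ℝ) - t) / k * (((t : ℝ) + 1) / t) * s i + 1 / k)) := by
  have ht0 : (0 : ℝ) < t := by exact_mod_cast (by omega : 0 < t)
  have htk : (t : ℝ) ≤ k := by exact_mod_cast hkt.le
  refine ⟨fun m hm s _ hs => ?_, fun m hm s _ hs => ?_, fun s hs => ?_⟩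
  · exact binWeight_le_of_sum_le_one ht0 htk s (by simpa using hm) hs
  · exact one_le_binWeight_of_threshold_le_sum ht0 htk s (by simpa using hm) hs
  · exact one_le_binWeight_of_card_eq ht0 htk s (by simp) hs
end
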